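/- arXiv:1902.07414 — 3 statements merged into one kernel-verified Lean document; each statement's English description precedes it below -/
import Mathlib

section
/- For any polynomial f in k variables with complex coefficients, there exists a polynomial F in one variable such that for all natural numbers n, F(n) = ∑_{1 ≤ i_1 < i_2 < ⋯ < i_k ≤ n} f(i_1, …, i_k). -/
/-!
Call a sequence `ℕ → R` polynomial if it is `n ↦ F(n)` for some `F ∈ R[X]`. Over a `ℚ`-algebra
these sequences form a subalgebra that is closed under partial sums, by Faulhaber's formula for
`∑_{m<n} m^e` in terms of Bernoulli polynomials. Splitting off the largest index `i_{k+1} = m + 1`,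
the sum of `∏ i_t ^ d_t` over increasing `(k+1)`-tuples in `{1, …, n}` is the partial sum over
`m < n` of `(m + 1) ^ d_{k+1}` times the analogous sum over `k`-tuples in `{1, …, m}`, so induction
on `k` handles monomials, and linearity handles all polynomials.
-/

open Finset Polynomial

section PolynomialSequences

variable (R : Type*) [CommRing R]

noncomputable def polynomialSequences : Subalgebra R (ℕ → R) :=
  (aeval fun n : ℕ => (n : R)).range

variable {R}

theorem mem_polynomialSequences {u : ℕ → R} :
    u ∈ polynomialSequences R ↔ ∃ F : R[X], ∀ n : ℕ, F.eval (n : R) = u n := by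
  simp [polynomialSequences, aeval_pi_apply, coe_aeval_eq_eval, funext_iff]

theorem natCast_mem_polynomialSequences : (fun n : ℕ => (n : R)) ∈ polynomialSequences R :=
  mem_polynomialSequences.2 ⟨X, fun _ => eval_X⟩

theorem sum_range_pow_mem_polynomialSequences [Algebra ℚ R] (e : ℕ) :
    (fun n => ∑ m ∈ range n, (m : R) ^ e) ∈ polynomialSequences R := by
  let F : ℚ[X] := C (e + 1 : ℚ)⁻¹ * (Polynomial.bernoulli (e + 1) - C (_root_.bernoulli (e + 1)))
  refine mem_polynomialSequences.2 ⟨F.map (algebraMap ℚ R), fun n => ?_⟩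
  have hF : F.eval (n : ℚ) = ∑ m ∈ range n, (m : ℚ) ^ e := by
    simp only [F, eval_mul, eval_C, eval_sub]
    rw [inv_mul_eq_iff_eq_mul₀ (by positivity), sum_range_pow_eq_bernoulli_sub]
  rw [eval_natCast_map, hF]
  simp

theorem sum_range_mem_polynomialSequences [Algebra ℚ R] {u : ℕ → R}
    (hu : u ∈ polynomialSequences R) :
    (fun n => ∑ m ∈ range n, u m) ∈ polynomialSequences R := by
  obtain ⟨F, hF⟩ := mem_polynomialSequences.1 hu
  simp only [← hF]
  clear hF
  induction F using Polynomial.induction_on' with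
  | add p q hp hq => simpa [sum_add_distrib, Pi.add_def] using add_mem hp hq
  | monomial e a =>
    simpa [← mul_sum, Pi.smul_def] using
      Subalgebra.smul_mem _ (sum_range_pow_mem_polynomialSequences e) a

end PolynomialSequences

theorem Fin.strictMono_snoc_iff {α : Type*} [Preorder α] {k : ℕ} {j : Fin k → α} {x : α} :
    StrictMono (Fin.snoc j x : Fin (k + 1) → α) ↔ StrictMono j ∧ ∀ t, j t < x := by
  refine ⟨fun h => ⟨fun a b hab => ?_, fun t => ?_⟩, fun ⟨hj, hx⟩ a b hab => ?_⟩
  · simpa using h (Fin.castSucc_lt_castSucc_iff.2 hab)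
  · simpa using h (Fin.castSucc_lt_last t)
  · obtain ⟨b, rfl⟩ | rfl := b.eq_castSucc_or_eq_last
    · obtain ⟨a, rfl⟩ := a.eq_castSucc_of_ne_last (Fin.ne_last_of_lt hab)
      simpa using hj (Fin.castSucc_lt_castSucc_iff.1 hab)
    · obtain ⟨a, rfl⟩ := a.eq_castSucc_of_ne_last hab.ne
      simpa using hx a

def increasingTuples (k n : ℕ) : Finset (Fin k → ℕ) :=
  (Fintype.piFinset fun _ : Fin k => Icc 1 n).filter fun i => ∀ a b : Fin k, a < b → i a < i b

theorem mem_increasingTuples {k n : ℕ} {i : Fin k → ℕ} :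
    i ∈ increasingTuples k n ↔ (∀ t, 1 ≤ i t ∧ i t ≤ n) ∧ StrictMono i := by
  simp [increasingTuples, StrictMono]

theorem snoc_mem_increasingTuples_succ {k n m : ℕ} {j : Fin k → ℕ} :
    (Fin.snoc j (m + 1) : Fin (k + 1) → ℕ) ∈ increasingTuples (k + 1) n ↔
      m < n ∧ j ∈ increasingTuples k m := by
  simp only [mem_increasingTuples, Fin.forall_fin_succ', Fin.snoc_castSucc, Fin.snoc_last,
    Fin.strictMono_snoc_iff]
  grind

theorem sum_increasingTuples_succ {M : Type*} [AddCommMonoid M] (k n : ℕ)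
    (g : (Fin (k + 1) → ℕ) → M) :
    ∑ i ∈ increasingTuples (k + 1) n, g i =
      ∑ m ∈ range n, ∑ j ∈ increasingTuples k m, g (Fin.snoc j (m + 1)) := by
  rw [sum_sigma']
  symm
  refine sum_bij (fun p _ => Fin.snoc p.2 (p.1 + 1)) (fun p hp => ?_) (fun p _ q _ h => ?_)
    (fun i hi => ?_) (fun _ _ => rfl)
  · simpa [snoc_mem_increasingTuples_succ] using hp
  · obtain ⟨hj, hm⟩ := Fin.snoc_injective2 h
    exact Sigma.ext (by omega) (heq_of_eq hj)
  · have hlast : 1 ≤ i (Fin.last k) := ((mem_increasingTuples.1 hi).1 _).1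
    have hi' : i = Fin.snoc (Fin.init i) (i (Fin.last k) - 1 + 1) := by
      rw [Nat.sub_add_cancel hlast, Fin.snoc_init_self]
    rw [hi', snoc_mem_increasingTuples_succ] at hi
    exact ⟨⟨_, _⟩, mem_sigma.2 ⟨mem_range.2 hi.1, hi.2⟩, hi'.symm⟩

variable {R : Type*} [CommRing R] [Algebra ℚ R]

theorem sum_prod_pow_increasingTuples_mem_polynomialSequences (k : ℕ) (d : Fin k → ℕ) :
    (fun n => ∑ i ∈ increasingTuples k n, ∏ t, (i t : R) ^ d t) ∈ polynomialSequences R := by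
  induction k with
  | zero =>
    convert one_mem (polynomialSequences R) using 1
    ext n
    simp [increasingTuples]
  | succ k ih =>
    simp only [sum_increasingTuples_succ, Fin.prod_univ_castSucc, Fin.snoc_castSucc,
      Fin.snoc_last, ← sum_mul, Nat.cast_succ]
    exact sum_range_mem_polynomialSequences <| mul_mem (ih _) <|
      pow_mem (add_mem natCast_mem_polynomialSequences (one_mem _)) _

theorem sum_eval_increasingTuples_mem_polynomialSequences {k : ℕ} (f : MvPolynomial (Fin k) R) :
    (fun n => ∑ i ∈ increasingTuples k n, MvPolynomial.eval (fun t => (i t : R)) f) ∈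
      polynomialSequences R := by
  induction f using MvPolynomial.induction_on' with
  | monomial d a =>
    simpa [MvPolynomial.eval_monomial, Finsupp.prod_pow, ← mul_sum, Pi.smul_def] using
      Subalgebra.smul_mem _ (sum_prod_pow_increasingTuples_mem_polynomialSequences k d) a
  | add p q hp hq => simpa [sum_add_distrib, Pi.add_def] using add_mem hp hq

/-- For any polynomial `f` in `k` variables there is a one-variable polynomial `F`
such that `F(n) = ∑_{1 ≤ i₁ < i₂ < ⋯ < i_k ≤ n} f(i₁, …, i_k)` for all `n`. -/
theorem sum_over_increasing_tuples_is_polynomial (k : ℕ) (f : MvPolynomial (Fin k) ℂ) :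
    ∃ F : Polynomial ℂ, ∀ n : ℕ,
      F.eval (n : ℂ) =
        ∑ i ∈ (Fintype.piFinset fun _ : Fin k => Finset.Icc 1 n).filter
            (fun i => ∀ a b : Fin k, a < b → i a < i b),
          MvPolynomial.eval (fun t => (i t : ℂ)) f :=
  mem_polynomialSequences.1 (sum_eval_increasingTuples_mem_polynomialSequences f)
end

section
/- In the expansion (∂+I_1)⋯(∂+I_n) = ∂^n + ∑_j {}^nU_j ∂^{n−j}, one has {}^nU_3 = ∑_{i_1<i_2<i_3} I_{i_1}I_{i_2}I_{i_3} + ∑_{i_1<i_2} (i_1−1) I_{i_1}' I_{i_2} + ∑_{i_1<i_2} (i_2−2) I_{i_1} I_{i_2}' + ∑_i C(i−1, 2) I_i''. -/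
/-! Left multiplication by `∂ + I₁` turns the coefficients `V_j` of `(∂+I₂)⋯(∂+I_n)` into
`U_j = V_j + V_{j-1}' + I₁ V_{j-1}`. Inducting on `n` with this recursion, we compute `U₀ = 1`,
`U₁ = ∑ I_i`, `U₂ = ∑_{i<j} I_i I_j + ∑_j (j-1) I_j'` and then `U₃`: peeling off the first factor
shifts all indices by one, and `V₂' + I₁ V₂` supplies exactly the terms involving `I₁` together
with the increments of the coefficients (e.g. `C(i,2) - C(i-1,2) = i-1` for `I_i''`). -/

/-- The coefficients of the Miura product
`(∂+I₁)(∂+I₂)⋯(∂+I_n) = ∂^n + ∑_{j≥1} U_j ∂^{n-j}` over a commutative ring `R`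
with derivation `δ`; `miuraCoeff δ I n j` is the coefficient `U_j`
(of `∂^{n-j}`), computed using `∂·f = f·∂ + δ f`. -/
def miuraCoeff {R : Type*} [CommRing R] (δ : R → R) : (I : ℕ → R) → ℕ → ℕ → R
  | _, 0, j => if j = 0 then 1 else 0
  | I, n + 1, j =>
      miuraCoeff δ (fun m => I (m + 1)) n j +
        if j = 0 then 0 else
          δ (miuraCoeff δ (fun m => I (m + 1)) n (j - 1)) +
            I 1 * miuraCoeff δ (fun m => I (m + 1)) n (j - 1)

open Finset

namespace Finset

variable {M : Type*} [AddCommMonoid M]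

theorem sum_sum_range_succ' (f : ℕ → ℕ → M) (n : ℕ) :
    ∑ j ∈ range (n + 1), ∑ i ∈ range j, f i j =
      ∑ j ∈ range n, ∑ i ∈ range j, f (i + 1) (j + 1) + ∑ j ∈ range n, f 0 (j + 1) := by
  simp only [sum_range_succ' _ n, range_zero, sum_empty, add_zero, sum_range_succ',
    sum_add_distrib]

theorem sum_Ico_one_eq_sum_range (f : ℕ → M) (n : ℕ) :
    ∑ i ∈ Ico 1 (n + 1), f i = ∑ i ∈ range n, f (i + 1) := by
  rw [range_eq_Ico, sum_Ico_add' f 0 n 1]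

theorem sum_Icc_one_eq_sum_range (f : ℕ → M) (n : ℕ) :
    ∑ i ∈ Icc 1 n, f i = ∑ i ∈ range n, f (i + 1) := by
  rw [← Ico_add_one_right_eq_Icc, sum_Ico_one_eq_sum_range]

end Finset

section

variable {R : Type*} [CommRing R]

theorem miuraCoeff_zero_right (δ : R → R) (I : ℕ → R) (n : ℕ) : miuraCoeff δ I n 0 = 1 := by
  induction n generalizing I with
  | zero => rfl
  | succ n ih => simp [miuraCoeff, ih]

theorem miuraCoeff_succ_succ (δ : R → R) (I : ℕ → R) (n j : ℕ) :
    miuraCoeff δ I (n + 1) (j + 1) =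
      miuraCoeff δ (fun m => I (m + 1)) n (j + 1) +
        (δ (miuraCoeff δ (fun m => I (m + 1)) n j) +
          I 1 * miuraCoeff δ (fun m => I (m + 1)) n j) :=
  rfl

variable (D : Derivation ℤ R R)

theorem miuraCoeff_one_right (I : ℕ → R) (n : ℕ) :
    miuraCoeff D I n 1 = ∑ i ∈ range n, I (i + 1) := by
  induction n generalizing I with
  | zero => rfl
  | succ n ih =>
    rw [miuraCoeff_succ_succ, ih, miuraCoeff_zero_right, sum_range_succ']
    simp [add_comm]

theorem miuraCoeff_two_right (I : ℕ → R) (n : ℕ) :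
    miuraCoeff D I n 2 =
      ∑ j ∈ range n, ∑ i ∈ range j, I (i + 1) * I (j + 1) +
        ∑ j ∈ range n, j * D (I (j + 1)) := by
  induction n generalizing I with
  | zero => simp [miuraCoeff]
  | succ n ih =>
    rw [miuraCoeff_succ_succ, ih, miuraCoeff_one_right, sum_sum_range_succ',
      sum_range_succ' _ n]
    simp only [map_sum, mul_sum, Nat.cast_add, Nat.cast_one, add_mul, one_mul, sum_add_distrib]
    ring

theorem miuraCoeff_three_right (I : ℕ → R) (n : ℕ) :
    miuraCoeff D I n 3 =
      ∑ k ∈ range n, ∑ j ∈ range k, ∑ i ∈ range j, I (i + 1) * I (j + 1) * I (k + 1) +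
        ∑ j ∈ range n, ∑ i ∈ range j, i * (I (j + 1) * D (I (i + 1))) +
        ∑ j ∈ range n, ∑ i ∈ range j, (j - 1 : R) * (I (i + 1) * D (I (j + 1))) +
        ∑ i ∈ range n, (i.choose 2 : ℕ) * D (D (I (i + 1))) := by
  induction n generalizing I with
  | zero => simp [miuraCoeff]
  | succ n ih =>
    rw [miuraCoeff_succ_succ, ih, miuraCoeff_two_right, sum_sum_range_succ',
      sum_sum_range_succ', sum_sum_range_succ', sum_range_succ' _ n]
    simp only [sum_range_succ', range_zero, sum_empty, add_zero, map_sum, map_add, mul_sum, mul_add,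
      Derivation.leibniz, smul_eq_mul, Derivation.map_natCast, mul_zero, Nat.cast_zero, zero_mul,
      zero_add, Nat.cast_add, Nat.cast_one, add_mul, one_mul, add_sub_cancel_right, sum_add_distrib,
      Nat.choose_succ_succ', Nat.choose_one_right, Nat.choose_zero_succ, sub_mul, sum_sub_distrib,
      sum_const_zero]
    ring_nf

theorem miuraCoeff_three_right_eq_sum_Icc (I : ℕ → R) (n : ℕ) :
    miuraCoeff D I n 3 =
      ∑ k ∈ Icc 1 n, ∑ j ∈ Ico 1 k, ∑ i ∈ Ico 1 j, I i * I j * I k +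
        ∑ j ∈ Icc 1 n, ∑ i ∈ Ico 1 j, (i - 1 : R) * D (I i) * I j +
        ∑ j ∈ Icc 1 n, ∑ i ∈ Ico 1 j, (j - 2 : R) * (I i * D (I j)) +
        ∑ i ∈ Icc 1 n, ((i - 1).choose 2 : ℕ) * D (D (I i)) := by
  rw [miuraCoeff_three_right]
  simp only [sum_Icc_one_eq_sum_range, sum_Ico_one_eq_sum_range, Nat.add_sub_cancel]
  congr 2
  · congr 1
    refine sum_congr rfl fun j _ => sum_congr rfl fun i _ => ?_
    push_cast
    ring
  · refine sum_congr rfl fun j _ => sum_congr rfl fun i _ => ?_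
    push_cast
    ring

end

/-- In `(∂+I₁)⋯(∂+I_n) = ∂^n + ∑_j ⁿU_j ∂^{n-j}` one has
`ⁿU₃ = ∑_{i₁<i₂<i₃} I_{i₁}I_{i₂}I_{i₃} + ∑_{i₁<i₂}(i₁-1)I_{i₁}'I_{i₂}
  + ∑_{i₁<i₂}(i₂-2)I_{i₁}I_{i₂}' + ∑_i C(i-1,2) I_i''`. -/
theorem miura_U3 {R : Type*} [CommRing R] (δ : R → R)
    (hadd : ∀ a b : R, δ (a + b) = δ a + δ b)
    (hleib : ∀ a b : R, δ (a * b) = a * δ b + δ a * b)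
    (I : ℕ → R) (n : ℕ) :
    miuraCoeff δ I n 3 =
      (∑ k ∈ Finset.Icc 1 n, ∑ j ∈ Finset.Ico 1 k, ∑ i ∈ Finset.Ico 1 j,
          I i * I j * I k) +
      (∑ j ∈ Finset.Icc 1 n, ∑ i ∈ Finset.Ico 1 j, ((i : R) - 1) * δ (I i) * I j) +
      (∑ j ∈ Finset.Icc 1 n, ∑ i ∈ Finset.Ico 1 j, ((j : R) - 2) * (I i * δ (I j))) +
      ∑ i ∈ Finset.Icc 1 n, (((i - 1).choose 2 : ℕ) : R) * δ (δ (I i)) :=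
  miuraCoeff_three_right_eq_sum_Icc
    (Derivation.mk' (AddMonoidHom.mk' δ hadd).toIntLinearMap fun a b => by
      simp [hleib, mul_comm]) I n
end

section
/- Splitting the Miura product at position m gives compatibility of coefficients: if (∂+I_1)⋯(∂+I_{m+n}) = ∂^{m+n} + ∑_j P_j ∂^{m+n−j}, (∂+I_1)⋯(∂+I_m) = ∂^m + ∑_j W_j ∂^{m−j}, and (∂+I_{m+1})⋯(∂+I_{m+n}) = ∂^n + ∑_j U_j ∂^{n−j}, then P_j = ∑_{0 ≤ a+b ≤ j} C(m−a, j−a−b) W_a U_b^{(j−a−b)}, where W_0 = U_0 = 1. -/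
/-!
With `∂^x U = ∑_k C(x,k) U^{(k)} ∂^{x-k}`, the product `(∑_a W_a ∂^{c-a}) (∑_b U_b ∂^{d-b})` has
`j`-th coefficient `∑_{a+b+k=j} C(c-a,k) W_a U_b^{(k)}`, a formula that makes sense for every
`c : ℚ`. By Pascal's rule `C(x+1,k+1) = C(x,k+1) + C(x,k)` it is compatible with left
multiplication by `∂ + f` when `c` is raised by one, so peeling the factors `∂ + I_i` off
`(∂+I_1)⋯(∂+I_m)` one at a time proves the splitting formula by induction on `m`.
-/

/-- Generalized binomial coefficient `C(x, k) = x(x-1)⋯(x-k+1)/k!` over ℚ. -/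
noncomputable def gbinomQ (x : ℚ) (k : ℕ) : ℚ :=
  (∏ i ∈ Finset.range k, (x - i)) / (k.factorial : ℚ)

open Finset Finset.Nat

theorem gbinomQ_eq_choose (x : ℚ) (k : ℕ) : gbinomQ x k = Ring.choose x k := by
  rw [gbinomQ, div_eq_iff (by positivity), mul_comm, ← nsmul_eq_mul,
    ← Ring.descPochhammer_eq_factorial_smul_choose, ← Polynomial.aeval_eq_smeval,
    Polynomial.aeval_def, ← Polynomial.eval_map, descPochhammer_map,
    descPochhammer_eval_eq_prod_range]

section Operators

variable {R : Type*} [CommRing R]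

/-- Coefficients of `(∂ + f) L` for `L = ∑_j V_j ∂^{d-j}`. -/
def dPlusMul (δ : R → R) (f : R) (V : ℕ → R) (j : ℕ) : R :=
  V j + if j = 0 then 0 else δ (V (j - 1)) + f * V (j - 1)

lemma dPlusMul_zero (δ : R → R) (f : R) (V : ℕ → R) : dPlusMul δ f V 0 = V 0 := by
  simp [dPlusMul]

lemma dPlusMul_succ (δ : R → R) (f : R) (V : ℕ → R) (j : ℕ) :
    dPlusMul δ f V (j + 1) = V (j + 1) + (δ (V j) + f * V j) := by
  simp [dPlusMul]

lemma miuraCoeff_zero_left (δ : R → R) (I : ℕ → R) :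
    miuraCoeff δ I 0 = Pi.single 0 1 := by
  ext j
  rcases j with _ | j <;> simp [miuraCoeff]

lemma miuraCoeff_succ (δ : R → R) (I : ℕ → R) (n : ℕ) :
    miuraCoeff δ I (n + 1) = dPlusMul δ (I 1) (miuraCoeff δ (fun t => I (t + 1)) n) :=
  rfl

variable [Algebra ℚ R] (D : Derivation ℤ R R)

/-- Coefficients of `∂^x L` for `L = ∑_b U_b ∂^{-b}`. -/
noncomputable def derivPowMul (x : ℚ) (U : ℕ → R) (r : ℕ) : R :=
  ∑ p ∈ antidiagonal r, Ring.choose x p.2 • D^[p.2] (U p.1)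

lemma derivPowMul_zero (x : ℚ) (U : ℕ → R) : derivPowMul D x U 0 = U 0 := by
  simp [derivPowMul]

lemma derivPowMul_zero_left (U : ℕ → R) : derivPowMul D 0 U = U := by
  ext r
  rw [derivPowMul, sum_eq_single (r, 0)]
  · simp
  · rintro ⟨b, k⟩ hp hne
    have hk : k ≠ 0 := by rintro rfl; simp_all
    simp [Ring.choose_zero_ite, hk]
  · simp

lemma derivPowMul_add_one_succ (x : ℚ) (U : ℕ → R) (r : ℕ) :
    derivPowMul D (x + 1) U (r + 1) = derivPowMul D x U (r + 1) + D (derivPowMul D x U r) := by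
  simp only [derivPowMul, sum_antidiagonal_succ', Ring.choose_succ_succ, Ring.choose_zero_right,
    add_smul, sum_add_distrib, map_sum, map_rat_smul, Function.iterate_succ_apply']
  abel

/-- Coefficients of `(∑_a W_a ∂^{c-a}) (∑_b U_b ∂^{-b})`. -/
noncomputable def opMul (c : ℚ) (W U : ℕ → R) (j : ℕ) : R :=
  ∑ p ∈ antidiagonal j, W p.1 * derivPowMul D (c - p.1) U p.2

lemma opMul_zero (c : ℚ) (W U : ℕ → R) : opMul D c W U 0 = W 0 * U 0 := by
  simp [opMul, derivPowMul_zero]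

lemma opMul_zero_single (U : ℕ → R) : opMul D 0 (Pi.single 0 1) U = U := by
  ext j
  rw [opMul, sum_eq_single (0, j)]
  · simp [derivPowMul_zero_left]
  · rintro ⟨a, r⟩ _ hne
    have ha : a ≠ 0 := by rintro rfl; simp_all
    simp [ha]
  · simp

lemma dPlusMul_opMul (f : R) (c : ℚ) (W U : ℕ → R) :
    dPlusMul D f (opMul D c W U) = opMul D (c + 1) (dPlusMul D f W) U := by
  ext j
  rcases j with _ | j
  · simp only [dPlusMul_zero, opMul_zero]
  have h_old : ∑ p ∈ antidiagonal (j + 1), W p.1 * derivPowMul D (c + 1 - p.1) U p.2 =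
      opMul D c W U (j + 1) + ∑ p ∈ antidiagonal j, W p.1 * D (derivPowMul D (c - p.1) U p.2) := by
    simp only [opMul, sum_antidiagonal_succ', add_sub_right_comm c 1, derivPowMul_add_one_succ,
      derivPowMul_zero, mul_add, sum_add_distrib]
    abel
  have h_new : ∑ p ∈ antidiagonal (j + 1),
      (if p.1 = 0 then 0 else D (W (p.1 - 1)) + f * W (p.1 - 1)) * derivPowMul D (c + 1 - p.1) U p.2 =
      ∑ p ∈ antidiagonal j, (D (W p.1) + f * W p.1) * derivPowMul D (c - p.1) U p.2 := by
    simp [sum_antidiagonal_succ]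
  have h_leibniz : D (opMul D c W U j) = ∑ p ∈ antidiagonal j,
      (W p.1 * D (derivPowMul D (c - p.1) U p.2) + D (W p.1) * derivPowMul D (c - p.1) U p.2) := by
    simp [opMul, map_sum, Derivation.leibniz, mul_comm]
  have h_split : opMul D (c + 1) (dPlusMul D f W) U (j + 1) =
      ∑ p ∈ antidiagonal (j + 1), W p.1 * derivPowMul D (c + 1 - p.1) U p.2 +
      ∑ p ∈ antidiagonal (j + 1),
        (if p.1 = 0 then 0 else D (W (p.1 - 1)) + f * W (p.1 - 1)) *
          derivPowMul D (c + 1 - p.1) U p.2 := by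
    simp only [opMul, dPlusMul, add_mul, sum_add_distrib]
  rw [dPlusMul_succ, h_split, h_old, h_new, h_leibniz]
  simp only [opMul, mul_sum, add_mul, sum_add_distrib, mul_assoc]
  abel

lemma miuraCoeff_add (I : ℕ → R) (m n : ℕ) :
    miuraCoeff D I (m + n) = opMul D m (miuraCoeff D I m) (miuraCoeff D (fun t => I (t + m)) n) := by
  induction m generalizing I with
  | zero => simp [miuraCoeff_zero_left, opMul_zero_single]
  | succ m ih =>
    rw [Nat.add_right_comm, miuraCoeff_succ, ih, dPlusMul_opMul, miuraCoeff_succ, Nat.cast_succ]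
    rfl

lemma opMul_eq_sum_range (c : ℚ) (W U : ℕ → R) (j : ℕ) :
    opMul D c W U j = ∑ a ∈ range (j + 1), ∑ b ∈ range (j + 1 - a),
      Ring.choose (c - a) (j - a - b) • (W a * D^[j - a - b] (U b)) := by
  rw [opMul, sum_antidiagonal_eq_sum_range_succ_mk]
  refine sum_congr rfl fun a ha => ?_
  rw [derivPowMul, sum_antidiagonal_eq_sum_range_succ_mk, mul_sum,
    Nat.sub_add_comm (mem_range_succ_iff.mp ha)]
  refine sum_congr rfl fun b _ => ?_
  rw [mul_smul_comm, Nat.sub_right_comm]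

end Operators

theorem miura_split_general {R : Type*} [CommRing R] [Algebra ℚ R] (δ : R → R)
    (hadd : ∀ a b : R, δ (a + b) = δ a + δ b)
    (hleib : ∀ a b : R, δ (a * b) = a * δ b + δ a * b)
    (I : ℕ → R) (m n j : ℕ) :
    miuraCoeff δ I (m + n) j =
      ∑ a ∈ Finset.range (j + 1), ∑ b ∈ Finset.range (j + 1 - a),
        gbinomQ ((m : ℚ) - a) (j - a - b) •
          (miuraCoeff δ I m a *
            δ^[j - a - b] (miuraCoeff δ (fun t => I (t + m)) n b)) := by
  let D : Derivation ℤ R R := Derivation.mk' (AddMonoidHom.mk' δ hadd).toIntLinearMap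
    fun a b => by simp [hleib, mul_comm]
  simp only [gbinomQ_eq_choose]
  exact congrFun (miuraCoeff_add D I m n) j |>.trans (opMul_eq_sum_range D _ _ _ j)

/-- Splitting the Miura product at position `m`: if
`(∂+I₁)⋯(∂+I_{m+n}) = ∂^{m+n} + ∑_j P_j ∂^{m+n-j}`,
`(∂+I₁)⋯(∂+I_m) = ∂^m + ∑_j W_j ∂^{m-j}` and
`(∂+I_{m+1})⋯(∂+I_{m+n}) = ∂^n + ∑_j U_j ∂^{n-j}`, then
`P_j = ∑_{0 ≤ a+b ≤ j} C(m-a, j-a-b) W_a U_b^{(j-a-b)}` (with `W₀ = U₀ = 1`). -/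
theorem miura_split {R : Type*} [CommRing R] [Algebra ℚ R] (δ : R → R)
    (hadd : ∀ a b : R, δ (a + b) = δ a + δ b)
    (hleib : ∀ a b : R, δ (a * b) = a * δ b + δ a * b)
    (hsmul : ∀ (q : ℚ) (a : R), δ (q • a) = q • δ a)
    (I : ℕ → R) (m n j : ℕ) :
    miuraCoeff δ I (m + n) j =
      ∑ a ∈ Finset.range (j + 1), ∑ b ∈ Finset.range (j + 1 - a),
        gbinomQ ((m : ℚ) - a) (j - a - b) •
          (miuraCoeff δ I m a *
            δ^[j - a - b] (miuraCoeff δ (fun t => I (t + m)) n b)) :=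
  miura_split_general δ hadd hleib I m n j
end
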